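/- arXiv:2401.17490 — 3 statements merged into one kernel-verified Lean document; each statement's English description precedes it below -/
import Mathlib

section
/- For t > 0, the quadratic in q given by M(t,q) = g0(t) - g1(t) q + g2(t) q^2, with g0(t) = e^t(2 - 2e^t + t + t e^t), g1(t) = 2(e^t - 1)(1 - e^t + t e^t), g2(t) = t(e^t - 1)^2, satisfies M(t,q) > 0 for every q ≤ 0 and for every q ≥ 1. -/
/-!
Write `E = exp t`, `A t = 1 + (t - 1) E` and `B t = 2 + t + (t - 2) E`. Both vanish at `0` and
`A' = t E`, `B' = A`, so both are positive for `t > 0`. Then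
`M t q = E B - 2 (E - 1) A q + t (E - 1)² q²`, whose terms are all nonnegative when `q ≤ 0`, and
`M t (1 + r) = B + 2 (E - 1) (E - 1 - t) r + t (E - 1)² r²`, whose terms are all nonnegative when
`r ≥ 0` since `E ≥ 1 + t`.
-/

noncomputable def g0 (t : ℝ) : ℝ := Real.exp t * (2 - 2 * Real.exp t + t + t * Real.exp t)
noncomputable def g1 (t : ℝ) : ℝ := 2 * (Real.exp t - 1) * (1 - Real.exp t + t * Real.exp t)
noncomputable def g2 (t : ℝ) : ℝ := t * (Real.exp t - 1) ^ 2
noncomputable def M (t q : ℝ) : ℝ := g0 t - g1 t * q + g2 t * q ^ 2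

open Real

lemma pos_of_hasDerivAt_pos {f f' : ℝ → ℝ} (hf : ∀ x, HasDerivAt f (f' x) x) (h0 : f 0 = 0)
    (hf' : ∀ x, 0 < x → 0 < f' x) {t : ℝ} (ht : 0 < t) : 0 < f t := by
  have hmono : StrictMonoOn f (Set.Ici 0) := by
    refine strictMonoOn_of_deriv_pos (convex_Ici 0)
      (HasDerivAt.continuousOn fun x _ => hf x) fun x hx => ?_
    rw [interior_Ici] at hx
    rw [(hf x).deriv]
    exact hf' x hx
  simpa [h0] using hmono Set.self_mem_Ici ht.le ht

lemma one_add_sub_one_mul_exp_pos {t : ℝ} (ht : 0 < t) : 0 < 1 + (t - 1) * exp t := by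
  refine pos_of_hasDerivAt_pos (f := fun x => 1 + (x - 1) * exp x) (f' := fun x => x * exp x)
    (fun x => ?_) (by simp) (fun x hx => by positivity) ht
  exact ((((hasDerivAt_id' x).sub_const 1).mul (hasDerivAt_exp x)).const_add 1).congr_deriv
    (by ring)

lemma two_add_add_sub_two_mul_exp_pos {t : ℝ} (ht : 0 < t) :
    0 < 2 + t + (t - 2) * exp t := by
  refine pos_of_hasDerivAt_pos (f := fun x => 2 + x + (x - 2) * exp x)
    (f' := fun x => 1 + (x - 1) * exp x) (fun x => ?_) (by norm_num)
    (fun x hx => one_add_sub_one_mul_exp_pos hx) ht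
  exact (((hasDerivAt_id' x).const_add 2).add
    (((hasDerivAt_id' x).sub_const 2).mul (hasDerivAt_exp x))).congr_deriv (by ring)

lemma M_eq (t q : ℝ) :
    M t q = exp t * (2 + t + (t - 2) * exp t) - 2 * (exp t - 1) * (1 + (t - 1) * exp t) * q
      + t * (exp t - 1) ^ 2 * q ^ 2 := by
  unfold M g0 g1 g2
  ring

lemma M_one_add (t r : ℝ) :
    M t (1 + r) = 2 + t + (t - 2) * exp t + 2 * (exp t - 1) * (exp t - 1 - t) * r
      + t * (exp t - 1) ^ 2 * r ^ 2 := by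
  unfold M g0 g1 g2
  ring

lemma M_pos_of_nonpos {t q : ℝ} (ht : 0 < t) (hq : q ≤ 0) : 0 < M t q := by
  have hexp : 0 ≤ exp t - 1 := sub_nonneg.mpr (one_le_exp ht.le)
  have hlin : 0 ≤ 2 * (exp t - 1) * (1 + (t - 1) * exp t) * -q := by
    have := one_add_sub_one_mul_exp_pos ht
    have := neg_nonneg.mpr hq
    positivity
  have hquad : 0 ≤ t * (exp t - 1) ^ 2 * q ^ 2 := by positivity
  have hconst := mul_pos (exp_pos t) (two_add_add_sub_two_mul_exp_pos ht)
  rw [M_eq]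
  linarith

lemma M_pos_of_one_le {t q : ℝ} (ht : 0 < t) (hq : 1 ≤ q) : 0 < M t q := by
  obtain ⟨r, hr, rfl⟩ : ∃ r, 0 ≤ r ∧ q = 1 + r := ⟨q - 1, by linarith, by ring⟩
  have hexp : t + 1 ≤ exp t := add_one_le_exp t
  have hlin : 0 ≤ 2 * (exp t - 1) * (exp t - 1 - t) * r := by
    have : 0 ≤ exp t - 1 := by linarith
    have : 0 ≤ exp t - 1 - t := by linarith
    positivity
  have hquad : 0 ≤ t * (exp t - 1) ^ 2 * r ^ 2 := by positivity
  have hconst := two_add_add_sub_two_mul_exp_pos ht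
  rw [M_one_add]
  linarith

theorem M_pos (t q : ℝ) (ht : 0 < t) (hq : q ≤ 0 ∨ 1 ≤ q) : 0 < M t q := by
  rcases hq with hq | hq
  · exact M_pos_of_nonpos ht hq
  · exact M_pos_of_one_le ht hq
end

section
/- If q ≤ 0 or q ≥ 1, then for all r > q one has Φ(r,q) = ∑_{j=1}^∞ 2r(j-q)/(r+j-q)^3 < 1. -/
/-!
In the variable `x = r + j - q` the `j`-th term of `Φ(r, q)` is `2r(x - r)/x³`, which is
nonpositive for `x ≤ r` and is dominated, for `x ≥ r + 1`, by the increment `M(x) - M(x + 1)` of an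
explicit rational function `M` with `M → 0` and `M < 1` on `[r + 1, ∞)`. For `q ≤ 0` all terms have
`x ≥ r + 1`, so `Φ ≤ M(r + 1 - q) < 1`. For `q ≥ 1` drop the nonpositive terms until `r ∈ [x, x + 1)`;
the two remaining terms below `r + 1` together with `M(x + 2)` are still `< 1`, which after
substituting `x = 1 + e`, `r = 1 + e + f` is a polynomial with positive coefficients in `e, f ≥ 0`.
-/

open Filter Finset Topology

-- `Φ(r, q) = ∑_{k ≥ 0} phiSummand r (r + 1 - q + k)`
noncomputable def phiSummand (r x : ℝ) : ℝ := 2 * r * (x - r) / x ^ 3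

/-- The Euler–Maclaurin approximation `∫_x^∞ g + g(x)/2 - g'(x)/12` of `∑_{k ≥ 0} g(x + k)` for
`g(t) = 2r/t² - 2r²/t³ = phiSummand r t`, plus the slack term `r/x⁴`. -/
noncomputable def phiMajorant (r x : ℝ) : ℝ :=
  2 * r / x + (r - r ^ 2) / x ^ 2 + (r / 3 - r ^ 2) / x ^ 3 + (r - r ^ 2 / 2) / x ^ 4

lemma phiSummand_nonpos_of_nonpos {r x : ℝ} (hr : r ≤ 0) (hx : 0 < x) : phiSummand r x ≤ 0 :=
  div_nonpos_of_nonpos_of_nonneg (mul_nonpos_of_nonpos_of_nonneg (by linarith) (by linarith))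
    (by positivity)

lemma phiSummand_nonpos_of_le {r x : ℝ} (hx : 0 < x) (hxr : x ≤ r) : phiSummand r x ≤ 0 :=
  div_nonpos_of_nonpos_of_nonneg (mul_nonpos_of_nonneg_of_nonpos (by linarith) (by linarith))
    (by positivity)

lemma phiSummand_le_phiMajorant_sub {r x : ℝ} (hr : 0 < r) (hx : r + 1 ≤ x) :
    phiSummand r x ≤ phiMajorant r x - phiMajorant r (x + 1) := by
  have hx0 : 0 < x := by linarith
  have hx1 : 0 < x + 1 := by linarith
  rw [← sub_nonneg]
  have hid : phiMajorant r x - phiMajorant r (x + 1) - phiSummand r x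
      = r * (4 * x ^ 3 + 19 / 3 * x ^ 2 + 13 / 3 * x + 1 - r * x - r / 2) / (x ^ 4 * (x + 1) ^ 4) := by
    unfold phiMajorant phiSummand; field_simp; ring
  rw [hid]
  refine div_nonneg (mul_nonneg hr.le ?_) (by positivity)
  nlinarith [mul_le_mul_of_nonneg_right (show r ≤ x - 1 by linarith)
    (show (0:ℝ) ≤ x + 1 / 2 by linarith), pow_pos hx0 3, sq_nonneg x]

lemma phiMajorant_lt_one {r x : ℝ} (hr : 0 < r) (hx : r + 1 ≤ x) : phiMajorant r x < 1 := by
  have hx0 : 0 < x := by linarith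
  rw [← sub_pos]
  have hid : 1 - phiMajorant r x
      = (x ^ 4 - 2 * r * x ^ 3 + (r ^ 2 - r) * x ^ 2 + (r ^ 2 - r / 3) * x + (r ^ 2 / 2 - r))
        / x ^ 4 := by
    unfold phiMajorant; field_simp; ring
  rw [hid]
  refine div_pos ?_ (by positivity)
  have hd : 0 ≤ x - r - 1 := by linarith
  nlinarith [sq_nonneg (r - 1), hd, pow_nonneg hd 2, pow_nonneg hd 3, pow_nonneg hd 4,
    mul_nonneg hr.le hd, mul_nonneg hr.le (pow_nonneg hd 2), mul_nonneg hr.le (pow_nonneg hd 3),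
    mul_nonneg (mul_nonneg hr.le hr.le) hd, mul_nonneg (mul_nonneg hr.le hr.le) (pow_nonneg hd 2)]

lemma phiSummand_add_phiSummand_add_phiMajorant_lt_one {r x : ℝ} (hx : 1 ≤ x) (hxr : x ≤ r) :
    phiSummand r x + phiSummand r (x + 1) + phiMajorant r (x + 2) < 1 := by
  obtain ⟨e, he, rfl⟩ : ∃ e, 0 ≤ e ∧ x = 1 + e := ⟨x - 1, by linarith, by ring⟩
  obtain ⟨f, hf, rfl⟩ : ∃ f, 0 ≤ f ∧ r = 1 + e + f := ⟨r - (1 + e), by linarith, by ring⟩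
  rw [← sub_pos]
  have hid : 1 - (phiSummand (1 + e + f) (1 + e) + phiSummand (1 + e + f) (1 + e + 1)
        + phiMajorant (1 + e + f) (1 + e + 2))
      = (66 + 976*f + 1558*f^2 + (838/3)*e + (10558/3)*e*f + 4880*e*f^2
        + (1447/3)*e^2 + 5370*e^2*f + 6755*e^2*f^2 + (883/2)*e^3 + 4580*e^3*f
        + (10779/2)*e^3*f^2 + (471/2)*e^4 + 2410*e^4*f + (5403/2)*e^4*f^2
        + 77*e^5 + 805*e^5*f + (1737/2)*e^5*f^2 + 16*e^6 + 167*e^6*f + (349/2)*e^6*f^2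
        + (13/6)*e^7 + (59/3)*e^7*f + 20*e^7*f^2 + (1/6)*e^8 + e^8*f + e^8*f^2)
        / ((1 + e) ^ 3 * (2 + e) ^ 3 * (3 + e) ^ 4) := by
    have h1 : 1 + e ≠ 0 := by positivity
    have h2 : 1 + e + 1 ≠ 0 := by positivity
    have h3 : 1 + e + 2 ≠ 0 := by positivity
    unfold phiSummand phiMajorant; field_simp; ring
  rw [hid]
  refine div_pos ?_ (by positivity)
  have m : ∀ i j : ℕ, 0 ≤ e ^ i * f ^ j := fun i j => by positivity
  nlinarith [m 0 1, m 0 2, m 1 0, m 1 1, m 1 2, m 2 0, m 2 1, m 2 2, m 3 0, m 3 1, m 3 2,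
    m 4 0, m 4 1, m 4 2, m 5 0, m 5 1, m 5 2, m 6 0, m 6 1, m 6 2, m 7 0, m 7 1, m 7 2,
    m 8 0, m 8 1, m 8 2]

lemma tendsto_phiMajorant_atTop (r : ℝ) : Tendsto (phiMajorant r) atTop (𝓝 0) := by
  have h : ∀ (a : ℝ) {n : ℕ}, n ≠ 0 → Tendsto (fun x : ℝ => a / x ^ n) atTop (𝓝 0) :=
    fun a _ hn => tendsto_const_nhds.div_atTop (tendsto_pow_atTop hn)
  unfold phiMajorant
  simpa using (((h (2 * r) one_ne_zero).add (h _ two_ne_zero)).add (h _ three_ne_zero)).add (h _ four_ne_zero)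

lemma summable_one_div_add_natCast_pow {c : ℝ} (hc : 0 < c) {n : ℕ} (hn : 1 < n) :
    Summable fun k : ℕ => 1 / (c + k) ^ n := by
  have := (Real.summable_one_div_nat_add_rpow c n).mpr (by exact_mod_cast hn)
  refine this.congr fun k => ?_
  rw [Real.rpow_natCast, abs_of_pos (by positivity), add_comm]

lemma summable_phiSummand (r : ℝ) {c : ℝ} (hc : 0 < c) :
    Summable fun k : ℕ => phiSummand r (c + k) := by
  have h2 := (summable_one_div_add_natCast_pow hc one_lt_two).mul_left (2 * r)
  have h3 := (summable_one_div_add_natCast_pow hc (by norm_num : 1 < 3)).mul_left (2 * r ^ 2)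
  refine (h2.sub h3).congr fun k => ?_
  have : c + k ≠ 0 := by positivity
  unfold phiSummand; field_simp

lemma tsum_phiSummand_le_phiMajorant {r c : ℝ} (hr : 0 < r) (hc : r + 1 ≤ c) :
    ∑' k : ℕ, phiSummand r (c + k) ≤ phiMajorant r c := by
  have partial_le : ∀ n : ℕ, ∑ k ∈ range n, phiSummand r (c + k)
      ≤ phiMajorant r c - phiMajorant r (c + n) := by
    intro n
    induction n with
    | zero => simp
    | succ n ih =>
      have step := phiSummand_le_phiMajorant_sub hr (x := c + n) (by linarith [n.cast_nonneg (α := ℝ)])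
      rw [sum_range_succ, Nat.cast_succ, ← add_assoc]
      linarith
  have hlim : Tendsto (fun n : ℕ => phiMajorant r c - phiMajorant r (c + n)) atTop
      (𝓝 (phiMajorant r c)) := by
    simpa using tendsto_const_nhds.sub ((tendsto_phiMajorant_atTop r).comp
      (tendsto_atTop_add_const_left _ c tendsto_natCast_atTop_atTop))
  exact le_of_tendsto_of_tendsto' (summable_phiSummand r (by linarith)).hasSum.tendsto_sum_nat
    hlim partial_le

lemma tsum_phiSummand_eq_sum_add_tsum (r : ℝ) {c : ℝ} (hc : 0 < c) (n : ℕ) :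
    ∑' k : ℕ, phiSummand r (c + k)
      = ∑ k ∈ range n, phiSummand r (c + k) + ∑' k : ℕ, phiSummand r (c + n + k) := by
  rw [← (summable_phiSummand r hc).sum_add_tsum_nat_add n]
  congr 2 with k
  push_cast
  ring_nf

lemma tsum_phiSummand_lt_one_of_mem_Ico {r x : ℝ} (hx : 1 ≤ x) (hr : r ∈ Set.Ico x (x + 1)) :
    ∑' k : ℕ, phiSummand r (x + k) < 1 := by
  obtain ⟨hxr, hrx⟩ := hr
  have tail := tsum_phiSummand_le_phiMajorant (c := x + 2) (by linarith) (by linarith)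
  have head := phiSummand_add_phiSummand_add_phiMajorant_lt_one hx hxr
  rw [tsum_phiSummand_eq_sum_add_tsum r (by linarith) 2]
  simp only [sum_range_succ, sum_range_zero, Nat.cast_zero, Nat.cast_one, Nat.cast_ofNat,
    add_zero, zero_add]
  linarith

lemma tsum_phiSummand_lt_one {r c : ℝ} (hc : 1 < c) (hcr : r + 1 ≤ c ∨ c ≤ r) :
    ∑' k : ℕ, phiSummand r (c + k) < 1 := by
  rcases le_or_gt r 0 with hr | hr
  · exact (tsum_nonpos fun k => phiSummand_nonpos_of_nonpos hr (by positivity)).trans_lt one_pos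
  rcases hcr with hcr | hcr
  · exact (tsum_phiSummand_le_phiMajorant hr hcr).trans_lt (phiMajorant_lt_one hr hcr)
  · -- shift past the nonpositive terms so that `r` lies in `[x, x + 1)`
    set n := ⌊r - c⌋₊
    have hn : (n : ℝ) ≤ r - c := Nat.floor_le (by linarith)
    have hn' : r - c < n + 1 := Nat.lt_floor_add_one _
    have head : ∑ k ∈ range n, phiSummand r (c + k) ≤ 0 := by
      refine sum_nonpos fun k hk => phiSummand_nonpos_of_le (by positivity) ?_
      have : (k : ℝ) < n := by exact_mod_cast mem_range.mp hk
      linarith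
    have tail := tsum_phiSummand_lt_one_of_mem_Ico (r := r) (x := c + n)
      (by linarith [n.cast_nonneg (α := ℝ)]) ⟨by linarith, by linarith⟩
    rw [tsum_phiSummand_eq_sum_add_tsum r (by linarith) n]
    linarith

theorem Phi_lt_one (q r : ℝ) (hq : q ≤ 0 ∨ 1 ≤ q) (hr : q < r) :
    (∑' j : ℕ, 2 * r * ((j + 1 : ℝ) - q) / (r + (j + 1 : ℝ) - q) ^ 3) < 1 := by
  have hΦ : (∑' j : ℕ, 2 * r * ((j + 1 : ℝ) - q) / (r + (j + 1 : ℝ) - q) ^ 3)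
      = ∑' k : ℕ, phiSummand r (r + 1 - q + k) := by
    congr with j
    unfold phiSummand
    ring_nf
  rw [hΦ]
  exact tsum_phiSummand_lt_one (by linarith) (hq.imp (fun _ => by linarith) fun _ => by linarith)
end

section
/- Let p_r(x) = (-4 + 39r - 36r^2 + 162r^3) + (18 + 18r + 216r^2)x + (54 - 54r)x^2 - 108x^3. For every r > 2/3, p_r has exactly one positive real root Q_r, and Q_r lies in the open interval (3r/2 + 1/6, 3r/2 + 1/3). -/
/-- The cubic polynomial `p_r(x)`. -/
def p (r x : ℝ) : ℝ :=
  (-4 + 39 * r - 36 * r ^ 2 + 162 * r ^ 3) + (18 + 18 * r + 216 * r ^ 2) * x +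
    (54 - 54 * r) * x ^ 2 - 108 * x ^ 3

theorem p_unique_positive_root (r : ℝ) (hr : 2 / 3 < r) :
    (∃! x : ℝ, 0 < x ∧ p r x = 0) ∧
      ∀ x : ℝ, 0 < x → p r x = 0 → 3 * r / 2 + 1 / 6 < x ∧ x < 3 * r / 2 + 1 / 3 := by
  set a : ℝ := 3 * r / 2 + 1 / 6 with ha
  set b : ℝ := 3 * r / 2 + 1 / 3 with hb
  have hab : a < b := by rw [ha, hb]; linarith
  have ha0 : 0 < a := by rw [ha]; linarith
  -- sign on the left
  have hA : ∀ x : ℝ, 0 < x → x ≤ a → 0 < p r x := by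
    intro x hx hxa
    rw [ha] at hxa
    unfold p
    nlinarith [mul_pos hx (sub_pos.2 hr), sq_nonneg (x - (3*r/2+1/6)),
      mul_nonneg hx.le (sub_nonneg.2 hxa), mul_nonneg (mul_nonneg hx.le hx.le) (sub_nonneg.2 hxa),
      mul_nonneg (mul_nonneg hx.le (sub_nonneg.2 hxa)) (sub_nonneg.2 hxa), sq_nonneg (r - 2/3),
      mul_pos hx hx, sq_nonneg x]
  -- sign on the right
  have hB : ∀ x : ℝ, b ≤ x → p r x < 0 := by
    intro x hxb
    rw [hb] at hxb
    unfold p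
    nlinarith [sq_nonneg (x - (3*r/2+1/3)), mul_nonneg (sub_nonneg.2 hxb) (sub_nonneg.2 hr.le),
      mul_nonneg (mul_nonneg (sub_nonneg.2 hxb) (sub_nonneg.2 hxb)) (sub_nonneg.2 hxb),
      sq_nonneg (r-2/3),
      mul_nonneg (mul_nonneg (sub_nonneg.2 hxb) (sub_nonneg.2 hxb)) (sub_nonneg.2 hr.le),
      mul_nonneg (mul_nonneg (sub_nonneg.2 hr.le) (sub_nonneg.2 hr.le)) (sub_nonneg.2 hxb)]
  -- every positive root is in (a, b)
  have hloc : ∀ x : ℝ, 0 < x → p r x = 0 → a < x ∧ x < b := by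
    intro x hx hpx
    constructor
    · by_contra h
      exact absurd hpx (ne_of_gt (hA x hx (not_lt.1 h)))
    · by_contra h
      exact absurd hpx (ne_of_lt (hB x (not_lt.1 h)))
  -- derivative
  have hd : ∀ y : ℝ, HasDerivAt (p r)
      ((18 + 18 * r + 216 * r ^ 2) + (108 - 108 * r) * y - 324 * y ^ 2) y := by
    intro y
    have h : HasDerivAt (fun x : ℝ =>
        (-4 + 39 * r - 36 * r ^ 2 + 162 * r ^ 3) + (18 + 18 * r + 216 * r ^ 2) * x +
          (54 - 54 * r) * x ^ 2 - 108 * x ^ 3)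
        ((18 + 18 * r + 216 * r ^ 2) * 1 + (54 - 54 * r) * (2 * y ^ 1) - 108 * (3 * y ^ 2)) y := by
      exact ((((hasDerivAt_id y).const_mul _).const_add _).add
        ((hasDerivAt_pow 2 y).const_mul _)).sub ((hasDerivAt_pow 3 y).const_mul _)
    have h' := h
    convert h' using 1
    · rfl
    · ring
  have hcont : ContinuousOn (p r) (Set.Icc a b) :=
    fun x _ => (hd x).continuousAt.continuousWithinAt
  -- strict antitone on [a, b]
  have hanti : StrictAntiOn (p r) (Set.Icc a b) := by
    apply strictAntiOn_of_deriv_neg (convex_Icc a b) hcont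
    intro x hx
    rw [interior_Icc] at hx
    rw [(hd x).deriv]
    have hxa : a < x := hx.1
    rw [ha] at hxa
    nlinarith [mul_nonneg (sub_nonneg.2 hxa.le) (sub_nonneg.2 hxa.le), sq_nonneg (r - 2/3),
      mul_nonneg (sub_nonneg.2 hxa.le) (sub_nonneg.2 hr.le)]
  -- values at endpoints
  have hpa : 0 < p r a := hA a ha0 le_rfl
  have hpb : p r b < 0 := hB b le_rfl
  -- existence via IVT
  have hivt := intermediate_value_Ioo' hab.le hcont
  have h0 : (0 : ℝ) ∈ Set.Ioo (p r b) (p r a) := ⟨hpb, hpa⟩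
  obtain ⟨x0, hx0mem, hx0⟩ := hivt h0
  have hx0pos : 0 < x0 := ha0.trans hx0mem.1
  refine ⟨⟨x0, ⟨hx0pos, hx0⟩, ?_⟩, hloc⟩
  rintro y ⟨hy, hpy⟩
  obtain ⟨hya, hyb⟩ := hloc y hy hpy
  by_contra hne
  rcases lt_or_gt_of_ne hne with h | h
  · have := hanti ⟨hya.le, hyb.le⟩ ⟨hx0mem.1.le, hx0mem.2.le⟩ h
    rw [hx0, hpy] at this; exact lt_irrefl 0 this
  · have := hanti ⟨hx0mem.1.le, hx0mem.2.le⟩ ⟨hya.le, hyb.le⟩ h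
    rw [hx0, hpy] at this; exact lt_irrefl 0 this
end
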